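/- Let (X,d) be a metric space, μ a Borel measure on X that is finite and positive on every bounded open set, x₀ ∈ X, N > 1 and A ∈ (0,∞). Assume: (i) the function ρ ↦ μ(B_ρ(x₀))/ρ^N is non-increasing on (0,∞); (ii) lim_{ρ→0⁺} μ(B_ρ(x₀))/(ω_N ρ^N) = A; (iii) for every λ > 0, 2λ ∫_X d(x₀,x)² e^{−2λ d(x₀,x)²} dμ ≥ (N/2) ∫_X e^{−2λ d(x₀,x)²} dμ. Then μ(B_ρ(x₀)) = A ω_N ρ^N for all ρ > 0, i.e. μ is an N-volume cone at x₀ with density A. -/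

import Mathlib

/-!
Write `θ(s) = μ(B_s(x₀)) / s^N`: it is antitone with limit `K = A ω_N` at `0⁺`, so `θ ≤ K`.
The layer-cake formula and the substitution `s = u / √λ` give
`λ^{N/2} ∫ e^{-2λ d(x₀,x)²} dμ = ∫₀^∞ 4 u^{N+1} e^{-2u²} θ(u / √λ) du`.
The Gaussian inequality says that the left side has nonpositive derivative in `λ`, while as
`λ → ∞` the right side tends to `∫₀^∞ 4 u^{N+1} e^{-2u²} K du` by dominated convergence.
Hence at `λ = 1` the nonnegative function `4 u^{N+1} e^{-2u²} (K - θ(u))` has nonpositive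
integral, so `θ = K` almost everywhere, and everywhere by monotonicity.
-/

open MeasureTheory Set Filter

/-- `ω_N = π^{N/2} / Γ(N/2 + 1)`, the volume of the unit ball in dimension `N`. -/
noncomputable def omegaN (N : ℝ) : ℝ := Real.pi ^ (N / 2) / Real.Gamma (N / 2 + 1)

open Topology Real Metric
open scoped ENNReal

theorem AntitoneOn.le_of_tendsto_nhdsGT {f : ℝ → ℝ} {a L x : ℝ} (hf : AntitoneOn f (Ioi a))
    (hL : Tendsto f (𝓝[>] a) (𝓝 L)) (hx : a < x) : f x ≤ L := by
  refine ge_of_tendsto hL ?_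
  filter_upwards [Ioo_mem_nhdsGT hx] with y hy
  exact hf hy.1 hx hy.2.le

theorem AntitoneOn.eq_of_le_of_ae_le {θ : ℝ → ℝ} {a K r : ℝ} (hθ : AntitoneOn θ (Ioi a))
    (hle : ∀ s > a, θ s ≤ K) (hae : ∀ᵐ s ∂volume.restrict (Ioi a), K ≤ θ s) (hr : a < r) :
    θ r = K := by
  have hae' : ∀ᵐ s ∂volume.restrict (Ioi r), r < s ∧ K ≤ θ s :=
    (ae_restrict_mem measurableSet_Ioi).and
      (ae_restrict_of_ae_restrict_of_subset (Ioi_subset_Ioi hr.le) hae)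
  have : (ae (volume.restrict (Ioi r))).NeBot := ae_restrict_neBot.2 (by simp)
  obtain ⟨s, hrs, hKs⟩ := hae'.exists
  exact le_antisymm (hle r hr) (hKs.trans (hθ hr (hr.trans hrs) hrs.le))

theorem ae_eq_of_le_of_integral_mul_le {α : Type*} [MeasurableSpace α] {ν : Measure α}
    {w θ : α → ℝ} {K : ℝ} (hw : ∀ᵐ u ∂ν, 0 < w u) (hθ : ∀ᵐ u ∂ν, θ u ≤ K)
    (hwi : Integrable w ν) (hwθ : Integrable (fun u => w u * θ u) ν)
    (h : ∫ u, w u * K ∂ν ≤ ∫ u, w u * θ u ∂ν) : ∀ᵐ u ∂ν, θ u = K := by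
  have hgap_nonneg : 0 ≤ᵐ[ν] fun u => w u * (K - θ u) := by
    filter_upwards [hw, hθ] with u hwu hθu
    exact mul_nonneg hwu.le (sub_nonneg.2 hθu)
  have hgap_int : Integrable (fun u => w u * (K - θ u)) ν := by
    simp only [mul_sub]
    exact (hwi.mul_const K).sub hwθ
  have hgap_zero : ∫ u, w u * (K - θ u) ∂ν = 0 := by
    refine le_antisymm ?_ (integral_nonneg_of_ae hgap_nonneg)
    simp only [mul_sub]
    rw [integral_sub (hwi.mul_const K) hwθ]
    linarith
  filter_upwards [(integral_eq_zero_iff_of_nonneg_ae hgap_nonneg hgap_int).1 hgap_zero, hw]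
    with u hu hwu
  have : K - θ u = 0 := (mul_eq_zero.1 hu).resolve_left hwu.ne'
  linarith

theorem rpow_mul_integral_Ioi_rpow_mul_exp_neg_two_mul_sq (p : ℝ) (φ : ℝ → ℝ) {b : ℝ}
    (hb : 0 < b) :
    b ^ ((p + 1) / 2) * ∫ s in Ioi 0, s ^ p * exp (-2 * b * s ^ 2) * φ s
      = ∫ u in Ioi 0, u ^ p * exp (-2 * u ^ 2) * φ (u / √b) := by
  have hsqrt : 0 < √b := sqrt_pos.2 hb
  have hsub := integral_comp_mul_left_Ioi (fun s => s ^ p * exp (-2 * b * s ^ 2) * φ s) 0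
    (inv_pos.2 hsqrt)
  rw [mul_zero, inv_inv, smul_eq_mul] at hsub
  have hpow : b ^ ((p + 1) / 2) = √b ^ p * √b := by
    rw [← rpow_add_one hsqrt.ne', sqrt_eq_rpow, ← rpow_mul hb.le]
    ring_nf
  rw [hpow, mul_assoc, ← hsub, ← integral_const_mul]
  refine setIntegral_congr_fun measurableSet_Ioi fun u hu => ?_
  rw [mul_rpow (inv_nonneg.2 hsqrt.le) (le_of_lt hu), inv_rpow hsqrt.le, mul_pow, inv_pow,
    sq_sqrt hb.le, div_eq_inv_mul u]
  field_simp

theorem tendsto_setIntegral_mul_comp_div_sqrt {w θ : ℝ → ℝ} {K : ℝ}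
    (hw : IntegrableOn w (Ioi 0)) (hθm : Measurable θ) (hθ0 : ∀ s > 0, 0 ≤ θ s)
    (hθK : ∀ s > 0, θ s ≤ K) (hlim : Tendsto θ (𝓝[>] 0) (𝓝 K)) :
    Tendsto (fun b => ∫ u in Ioi 0, w u * θ (u / √b)) atTop (𝓝 (∫ u in Ioi 0, w u * K)) := by
  refine tendsto_integral_filter_of_dominated_convergence (fun u => ‖w u‖ * K)
    (Eventually.of_forall fun b => ?_) ?_ (hw.norm.mul_const K) ?_
  · exact hw.aestronglyMeasurable.mul
      (hθm.comp (measurable_id.div_const _)).aestronglyMeasurable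
  · filter_upwards [eventually_gt_atTop 0] with b hb
    filter_upwards [ae_restrict_mem measurableSet_Ioi] with u hu
    have hpos : 0 < u / √b := div_pos hu (sqrt_pos.2 hb)
    rw [norm_mul, norm_of_nonneg (hθ0 _ hpos)]
    exact mul_le_mul_of_nonneg_left (hθK _ hpos) (norm_nonneg _)
  · filter_upwards [ae_restrict_mem measurableSet_Ioi] with u hu
    refine (hlim.comp ?_).const_mul (w u)
    refine tendsto_nhdsWithin_iff.2 ⟨?_, ?_⟩
    · simpa [div_eq_mul_inv] using tendsto_sqrt_atTop.inv_tendsto_atTop.const_mul u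
    · filter_upwards [eventually_gt_atTop 0] with b hb
      exact div_pos hu (sqrt_pos.2 hb)

theorem AntitoneOn.eq_of_antitoneOn_integral_mul_comp_div_sqrt {w θ : ℝ → ℝ} {K r : ℝ}
    (hθ : AntitoneOn θ (Ioi 0)) (hθm : Measurable θ) (hθ0 : ∀ s > 0, 0 ≤ θ s)
    (hlim : Tendsto θ (𝓝[>] 0) (𝓝 K)) (hw0 : ∀ u > 0, 0 < w u) (hw : IntegrableOn w (Ioi 0))
    (hG : AntitoneOn (fun b => ∫ u in Ioi 0, w u * θ (u / √b)) (Ioi 0)) (hr : 0 < r) :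
    θ r = K := by
  have hθK : ∀ s > 0, θ s ≤ K := fun s hs => hθ.le_of_tendsto_nhdsGT hlim hs
  have hlow : ∫ u in Ioi 0, w u * K ≤ ∫ u in Ioi 0, w u * θ u := by
    refine le_of_tendsto (tendsto_setIntegral_mul_comp_div_sqrt hw hθm hθ0 hθK hlim) ?_
    filter_upwards [eventually_ge_atTop 1] with b hb
    simpa using hG (mem_Ioi.2 one_pos) (mem_Ioi.2 (one_pos.trans_le hb)) hb
  have hpos : ∀ᵐ u ∂volume.restrict (Ioi (0 : ℝ)), 0 < u :=
    ae_restrict_mem measurableSet_Ioi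
  have hae : ∀ᵐ u ∂volume.restrict (Ioi 0), θ u = K := by
    refine ae_eq_of_le_of_integral_mul_le (hpos.mono hw0) (hpos.mono hθK) hw
      (hw.mul_bdd (c := K) hθm.aestronglyMeasurable (hpos.mono fun u hu => ?_)) hlow
    rw [norm_of_nonneg (hθ0 u hu)]
    exact hθK u hu
  exact hθ.eq_of_le_of_ae_le hθK (hae.mono fun _ h => h.ge) hr

theorem integrable_mul_exp_neg_two_mul_sq {b : ℝ} (hb : 0 < b) :
    Integrable (fun s => 4 * b * s * exp (-2 * b * s ^ 2)) := by
  refine ((integrable_mul_exp_neg_mul_sq (b := 2 * b) (by positivity)).const_mul (4 * b)).congr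
    (Eventually.of_forall fun s => ?_)
  dsimp only
  ring_nf

theorem integral_Ioi_mul_exp_neg_two_mul_sq {b : ℝ} (hb : 0 < b) (t : ℝ) :
    ∫ s in Ioi t, 4 * b * s * exp (-2 * b * s ^ 2) = exp (-2 * b * t ^ 2) := by
  have hderiv : ∀ s, HasDerivAt (fun s => -exp (-2 * b * s ^ 2))
      (4 * b * s * exp (-2 * b * s ^ 2)) s := fun s =>
    (((hasDerivAt_pow 2 s).const_mul (-2 * b)).exp.neg).congr_deriv (by push_cast; ring)
  have hlim : Tendsto (fun s => -exp (-2 * b * s ^ 2)) atTop (𝓝 0) := by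
    simpa using (tendsto_exp_atBot.comp <|
      (tendsto_pow_atTop two_ne_zero).const_mul_atTop_of_neg (by linarith : -2 * b < 0)).neg
  rw [integral_Ioi_of_hasDerivAt_of_tendsto (hderiv t).continuousAt.continuousWithinAt
    (fun s _ => hderiv s) (integrable_mul_exp_neg_two_mul_sq hb).integrableOn hlim]
  ring

theorem integrableOn_rpow_mul_exp_neg_two_mul_sq {b p : ℝ} (hb : 0 < b) (hp : -1 < p) :
    IntegrableOn (fun s => s ^ p * exp (-2 * b * s ^ 2)) (Ioi 0) :=
  (integrableOn_rpow_mul_exp_neg_mul_sq (by positivity : 0 < 2 * b) hp).congr_fun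
    (fun s _ => by ring_nf) measurableSet_Ioi

section Laplace

variable {α : Type*} [MeasurableSpace α] {μ : Measure α} {f : α → ℝ}

theorem mul_exp_neg_two_mul_le {b c y : ℝ} (hb : 0 < b) (hc : b / 2 < c) (hy : 0 ≤ y) :
    y * exp (-2 * c * y) ≤ 2 / b * exp (-2 * (b / 4) * y) := by
  have hy_le : b / 2 * y ≤ exp (b / 2 * y) := by linarith [add_one_le_exp (b / 2 * y)]
  calc y * exp (-2 * c * y) ≤ (2 / b * exp (b / 2 * y)) * exp (-2 * c * y) := by
        gcongr
        rw [div_mul_eq_mul_div, le_div_iff₀ hb]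
        linarith
    _ = 2 / b * exp (-2 * (c - b / 4) * y) := by rw [mul_assoc, ← exp_add]; ring_nf
    _ ≤ 2 / b * exp (-2 * (b / 4) * y) := by gcongr 2 / b * exp ?_; nlinarith

theorem hasDerivAt_integral_exp_neg_two_mul (hf0 : ∀ a, 0 ≤ f a)
    (hfm : AEStronglyMeasurable f μ)
    (hint : ∀ b > 0, Integrable (fun a => exp (-2 * b * f a)) μ) {b : ℝ} (hb : 0 < b) :
    HasDerivAt (fun b => ∫ a, exp (-2 * b * f a) ∂μ)
      (-2 * ∫ a, f a * exp (-2 * b * f a) ∂μ) b := by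
  have hmeas : ∀ c, AEStronglyMeasurable (fun a => exp (-2 * c * f a)) μ := fun c =>
    continuous_exp.comp_aestronglyMeasurable (hfm.const_mul _)
  have hF := hasDerivAt_integral_of_dominated_loc_of_deriv_le (Ioi_mem_nhds (half_lt_self hb))
    (F' := fun c a => -2 * (f a * exp (-2 * c * f a)))
    (bound := fun a => 2 * (2 / b * exp (-2 * (b / 4) * f a)))
    (Eventually.of_forall hmeas) (hint b hb) ((hfm.mul (hmeas b)).const_mul _)
    (ae_of_all _ fun a c (hc : b / 2 < c) => ?_)
    (((hint _ (by positivity)).const_mul _).const_mul _) (ae_of_all _ fun a c _ => ?_)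
  · rw [integral_const_mul] at hF
    exact hF.2
  · have := mul_exp_neg_two_mul_le hb hc (hf0 a)
    rw [norm_mul, norm_of_nonneg (mul_nonneg (hf0 a) (exp_pos _).le), norm_neg, Real.norm_two]
    gcongr
  · exact ((((hasDerivAt_id' c).const_mul (-2)).mul_const (f a)).exp).congr_deriv (by ring)

theorem antitoneOn_rpow_mul_integral_exp_neg_two_mul (hf0 : ∀ a, 0 ≤ f a)
    (hfm : AEStronglyMeasurable f μ) (hint : ∀ b > 0, Integrable (fun a => exp (-2 * b * f a)) μ)
    {N : ℝ} (hineq : ∀ b > 0,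
      N / 2 * ∫ a, exp (-2 * b * f a) ∂μ ≤ 2 * b * ∫ a, f a * exp (-2 * b * f a) ∂μ) :
    AntitoneOn (fun b => b ^ (N / 2) * ∫ a, exp (-2 * b * f a) ∂μ) (Ioi 0) := by
  have hderiv : ∀ b ∈ Ioi (0 : ℝ),
      HasDerivAt (fun b => b ^ (N / 2) * ∫ a, exp (-2 * b * f a) ∂μ)
        (b ^ (N / 2 - 1) * (N / 2 * ∫ a, exp (-2 * b * f a) ∂μ
          - 2 * b * ∫ a, f a * exp (-2 * b * f a) ∂μ)) b := fun b (hb : 0 < b) => by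
    refine ((hasDerivAt_rpow_const (Or.inl hb.ne')).mul
      (hasDerivAt_integral_exp_neg_two_mul hf0 hfm hint hb)).congr_deriv ?_
    rw [show b ^ (N / 2) = b ^ (N / 2 - 1) * b by rw [← rpow_add_one hb.ne']; ring_nf]
    ring
  refine antitoneOn_of_deriv_nonpos (convex_Ioi 0)
    (fun b hb => (hderiv b hb).continuousAt.continuousWithinAt)
    (fun b hb => (hderiv b (interior_subset hb)).differentiableAt.differentiableWithinAt)
    fun b hb => ?_
  rw [interior_Ioi] at hb
  rw [(hderiv b hb).deriv]
  exact mul_nonpos_of_nonneg_of_nonpos (rpow_nonneg (le_of_lt hb) _) (sub_nonpos.2 (hineq b hb))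

end Laplace

theorem sigmaFinite_of_measure_ball_ne_top {X : Type*} [PseudoMetricSpace X] [MeasurableSpace X]
    {μ : Measure X} (x₀ : X) (h : ∀ s, μ (ball x₀ s) ≠ ∞) : SigmaFinite μ :=
  (⟨fun n : ℕ => ball x₀ n, fun _ => trivial, fun n => (h n).lt_top, iUnion_ball_nat x₀⟩ :
    μ.FiniteSpanningSetsIn univ).sigmaFinite

theorem lintegral_setLIntegral_Ioi_dist {X : Type*} [PseudoMetricSpace X] [MeasurableSpace X]
    [OpensMeasurableSpace X] (μ : Measure X) [SFinite μ] (x₀ : X) {h : ℝ → ℝ≥0∞}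
    (hh : Measurable h) :
    ∫⁻ x, (∫⁻ s in Ioi (dist x₀ x), h s) ∂μ = ∫⁻ s in Ioi 0, μ (ball x₀ s) * h s := by
  set F : X → ℝ → ℝ≥0∞ := fun x s => (ball x₀ s).indicator (fun _ => h s) x
  have hF : Measurable (Function.uncurry F) := by
    have hset : MeasurableSet {p : X × ℝ | dist x₀ p.1 < p.2} :=
      measurableSet_lt ((continuous_const.dist continuous_id).measurable.comp measurable_fst)
        measurable_snd
    convert (hh.comp measurable_snd).indicator hset using 1
    ext p
    simp [F, Function.uncurry, indicator, dist_comm]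
  have hinner : ∀ x, ∫⁻ s in Ioi (dist x₀ x), h s = ∫⁻ s in Ioi 0, F x s := by
    intro x
    have : ∀ s, F x s = (Ioi (dist x₀ x)).indicator h s := fun s => by
      simp [F, indicator, dist_comm]
    simp_rw [this, lintegral_indicator measurableSet_Ioi,
      Measure.restrict_restrict measurableSet_Ioi, Ioi_inter_Ioi, max_eq_left dist_nonneg]
  simp_rw [hinner]
  rw [lintegral_lintegral_swap hF.aemeasurable]
  refine setLIntegral_congr_fun measurableSet_Ioi fun s _ => ?_
  rw [lintegral_indicator_const measurableSet_ball, mul_comm]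

section LayerCake

variable {X : Type*} [PseudoMetricSpace X] [MeasurableSpace X] [OpensMeasurableSpace X]
  {μ : Measure X} {x₀ : X} {b : ℝ}

theorem lintegral_exp_neg_two_mul_dist_sq [SFinite μ] (hb : 0 < b) :
    ∫⁻ x, ENNReal.ofReal (exp (-2 * b * dist x₀ x ^ 2)) ∂μ
      = ∫⁻ s in Ioi 0, μ (ball x₀ s) * ENNReal.ofReal (4 * b * s * exp (-2 * b * s ^ 2)) := by
  rw [← lintegral_setLIntegral_Ioi_dist μ x₀ (by fun_prop)]
  refine lintegral_congr fun x => ?_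
  rw [← integral_Ioi_mul_exp_neg_two_mul_sq hb (dist x₀ x),
    ofReal_integral_eq_lintegral_ofReal (integrable_mul_exp_neg_two_mul_sq hb).integrableOn]
  filter_upwards [ae_restrict_mem measurableSet_Ioi] with s hs
  have : 0 < s := dist_nonneg.trans_lt hs
  positivity

theorem lintegral_exp_neg_two_mul_dist_sq_eq_ofReal (hb : 0 < b)
    (hfin : ∀ s, μ (ball x₀ s) ≠ ∞)
    (hint : IntegrableOn
      (fun s => 4 * b * s * exp (-2 * b * s ^ 2) * (μ (ball x₀ s)).toReal) (Ioi 0)) :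
    ∫⁻ x, ENNReal.ofReal (exp (-2 * b * dist x₀ x ^ 2)) ∂μ
      = ENNReal.ofReal
          (∫ s in Ioi 0, 4 * b * s * exp (-2 * b * s ^ 2) * (μ (ball x₀ s)).toReal) := by
  have := sigmaFinite_of_measure_ball_ne_top x₀ hfin
  rw [lintegral_exp_neg_two_mul_dist_sq hb, ofReal_integral_eq_lintegral_ofReal hint]
  · refine setLIntegral_congr_fun measurableSet_Ioi fun s (hs : 0 < s) => ?_
    rw [ENNReal.ofReal_mul (by positivity : 0 ≤ 4 * b * s * exp (-2 * b * s ^ 2)),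
      ENNReal.ofReal_toReal (hfin s), mul_comm]
  · filter_upwards [ae_restrict_mem measurableSet_Ioi] with s (hs : 0 < s)
    positivity

theorem integrable_exp_neg_two_mul_dist_sq (hb : 0 < b) (hfin : ∀ s, μ (ball x₀ s) ≠ ∞)
    (hint : IntegrableOn
      (fun s => 4 * b * s * exp (-2 * b * s ^ 2) * (μ (ball x₀ s)).toReal) (Ioi 0)) :
    Integrable (fun x => exp (-2 * b * dist x₀ x ^ 2)) μ := by
  refine ⟨(by fun_prop : Continuous fun x => exp (-2 * b * dist x₀ x ^ 2)).aestronglyMeasurable,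
    ?_⟩
  rw [hasFiniteIntegral_iff_ofReal (ae_of_all _ fun x => (exp_pos _).le),
    lintegral_exp_neg_two_mul_dist_sq_eq_ofReal hb hfin hint]
  exact ENNReal.ofReal_lt_top

theorem integral_exp_neg_two_mul_dist_sq (hb : 0 < b) (hfin : ∀ s, μ (ball x₀ s) ≠ ∞)
    (hint : IntegrableOn
      (fun s => 4 * b * s * exp (-2 * b * s ^ 2) * (μ (ball x₀ s)).toReal) (Ioi 0)) :
    ∫ x, exp (-2 * b * dist x₀ x ^ 2) ∂μ
      = ∫ s in Ioi 0, 4 * b * s * exp (-2 * b * s ^ 2) * (μ (ball x₀ s)).toReal := by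
  rw [integral_eq_lintegral_of_nonneg_ae (ae_of_all _ fun x => (exp_pos _).le)
    (by fun_prop : Continuous fun x => exp (-2 * b * dist x₀ x ^ 2)).aestronglyMeasurable,
    lintegral_exp_neg_two_mul_dist_sq_eq_ofReal hb hfin hint, ENNReal.toReal_ofReal]
  exact setIntegral_nonneg measurableSet_Ioi fun s (hs : 0 < s) => by positivity

end LayerCake

section VolumeRatio

variable {X : Type*} [PseudoMetricSpace X] [MeasurableSpace X] {μ : Measure X} {x₀ : X}
  {N K : ℝ}

noncomputable def ballVolumeRatio (μ : Measure X) (x₀ : X) (N s : ℝ) : ℝ :=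
  (μ (ball x₀ s)).toReal / s ^ N

theorem monotone_toReal_measure_ball (hfin : ∀ s, μ (ball x₀ s) ≠ ∞) :
    Monotone fun s => (μ (ball x₀ s)).toReal := fun _ t hst =>
  ENNReal.toReal_mono (hfin t) (measure_mono (ball_subset_ball hst))

theorem measurable_ballVolumeRatio (hfin : ∀ s, μ (ball x₀ s) ≠ ∞) :
    Measurable (ballVolumeRatio μ x₀ N) :=
  (monotone_toReal_measure_ball hfin).measurable.div (measurable_id.pow_const N)

theorem ballVolumeRatio_nonneg {s : ℝ} (hs : 0 < s) : 0 ≤ ballVolumeRatio μ x₀ N s :=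
  div_nonneg ENNReal.toReal_nonneg (rpow_nonneg hs.le N)

theorem integrable_and_rpow_mul_integral_exp_neg_two_mul_dist_sq [OpensMeasurableSpace X]
    (hN : -2 < N) (hfin : ∀ s, μ (ball x₀ s) ≠ ∞)
    (hK : ∀ s > 0, ballVolumeRatio μ x₀ N s ≤ K) {b : ℝ} (hb : 0 < b) :
    Integrable (fun x => exp (-2 * b * dist x₀ x ^ 2)) μ ∧
      b ^ (N / 2) * ∫ x, exp (-2 * b * dist x₀ x ^ 2) ∂μ
        = ∫ u in Ioi 0,
            4 * u ^ (N + 1) * exp (-2 * u ^ 2) * ballVolumeRatio μ x₀ N (u / √b) := by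
  have hprofile : ∀ s > 0, 4 * b * s * exp (-2 * b * s ^ 2) * (μ (ball x₀ s)).toReal
      = 4 * b * (s ^ (N + 1) * exp (-2 * b * s ^ 2) * ballVolumeRatio μ x₀ N s) := by
    intro s hs
    rw [ballVolumeRatio, rpow_add_one hs.ne']
    field_simp [(rpow_pos_of_pos hs N).ne']
  have hint : IntegrableOn
      (fun s => 4 * b * s * exp (-2 * b * s ^ 2) * (μ (ball x₀ s)).toReal) (Ioi 0) := by
    refine (((integrableOn_rpow_mul_exp_neg_two_mul_sq hb (by linarith : -1 < N + 1)).mul_const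
      K).const_mul (4 * b)).mono' ?_ ?_
    · exact ((by fun_prop : Measurable fun s => 4 * b * s * exp (-2 * b * s ^ 2)).mul
        (monotone_toReal_measure_ball hfin).measurable).aestronglyMeasurable
    filter_upwards [ae_restrict_mem measurableSet_Ioi] with s (hs : 0 < s)
    rw [hprofile s hs, norm_of_nonneg
      (mul_nonneg (by positivity) (mul_nonneg (by positivity) (ballVolumeRatio_nonneg hs)))]
    gcongr
    exact hK s hs
  refine ⟨integrable_exp_neg_two_mul_dist_sq hb hfin hint, ?_⟩
  rw [integral_exp_neg_two_mul_dist_sq hb hfin hint,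
    setIntegral_congr_fun measurableSet_Ioi hprofile, integral_const_mul]
  calc _ = 4 * (b ^ ((N + 1 + 1) / 2)
        * ∫ s in Ioi 0, s ^ (N + 1) * exp (-2 * b * s ^ 2) * ballVolumeRatio μ x₀ N s) := by
        rw [show (N + 1 + 1) / 2 = N / 2 + 1 by ring, rpow_add_one hb.ne']
        ring
    _ = _ := by
        rw [rpow_mul_integral_Ioi_rpow_mul_exp_neg_two_mul_sq _ _ hb, ← integral_const_mul]
        congr 1 with u
        ring

theorem omegaN_pos (hN : -2 < N) : 0 < omegaN N :=
  div_pos (rpow_pos_of_pos pi_pos _) (Gamma_pos_of_pos (by linarith))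

theorem tendsto_ballVolumeRatio {A : ℝ} (hN : -2 < N)
    (hlim : Tendsto (fun s => (μ (ball x₀ s)).toReal / (omegaN N * s ^ N)) (𝓝[>] 0) (𝓝 A)) :
    Tendsto (ballVolumeRatio μ x₀ N) (𝓝[>] 0) (𝓝 (A * omegaN N)) := by
  refine (hlim.mul_const _).congr fun s => ?_
  rw [ballVolumeRatio, div_mul_eq_mul_div, mul_comm, mul_div_mul_left _ _ (omegaN_pos hN).ne']

end VolumeRatio

theorem volume_cone_of_gaussian_inequality_general {X : Type*} [MetricSpace X]
    [MeasurableSpace X] [BorelSpace X] (μ : Measure X)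
    (hμ : ∀ U : Set X, IsOpen U → Bornology.IsBounded U → U.Nonempty →
      0 < μ U ∧ μ U ≠ ⊤)
    (x₀ : X) (N A : ℝ) (hN : 1 < N)
    (hBG : AntitoneOn (fun ρ => (μ (Metric.ball x₀ ρ)).toReal / ρ ^ N) (Ioi 0))
    (hlim : Tendsto (fun ρ => (μ (Metric.ball x₀ ρ)).toReal / (omegaN N * ρ ^ N))
      (nhdsWithin 0 (Ioi 0)) (nhds A))
    (hineq : ∀ lam > (0:ℝ),
      (N / 2) * ∫ x, Real.exp (-2 * lam * dist x₀ x ^ 2) ∂μ ≤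
        2 * lam * ∫ x, dist x₀ x ^ 2 * Real.exp (-2 * lam * dist x₀ x ^ 2) ∂μ) :
    ∀ ρ > (0:ℝ), μ (Metric.ball x₀ ρ) = ENNReal.ofReal (A * omegaN N * ρ ^ N) := by
  intro ρ hρ
  have hN' : -2 < N := by linarith
  have hfin : ∀ s, μ (ball x₀ s) ≠ ∞ := fun s => by
    rcases (ball x₀ s).eq_empty_or_nonempty with h | h
    · simp [h]
    · exact (hμ _ isOpen_ball isBounded_ball h).2
  have hθlim := tendsto_ballVolumeRatio hN' hlim
  have hG := fun b (hb : 0 < b) => integrable_and_rpow_mul_integral_exp_neg_two_mul_dist_sq hN'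
    hfin (fun s hs => hBG.le_of_tendsto_nhdsGT hθlim hs) hb
  have hanti := antitoneOn_rpow_mul_integral_exp_neg_two_mul (fun x => sq_nonneg (dist x₀ x))
    (by fun_prop) (fun b hb => (hG b hb).1) hineq
  have hw : IntegrableOn (fun u => 4 * u ^ (N + 1) * exp (-2 * u ^ 2)) (Ioi 0) :=
    IntegrableOn.congr_fun
      ((integrableOn_rpow_mul_exp_neg_two_mul_sq (p := N + 1) one_pos (by linarith)).const_mul 4)
      (fun u _ => by ring_nf) measurableSet_Ioi
  have hρK := hBG.eq_of_antitoneOn_integral_mul_comp_div_sqrt (measurable_ballVolumeRatio hfin)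
    (fun s hs => ballVolumeRatio_nonneg hs) hθlim (fun u hu => by positivity) hw
    (hanti.congr fun b hb => (hG b hb).2) hρ
  rw [← ENNReal.ofReal_toReal (hfin ρ), ← hρK,
    div_mul_cancel₀ _ (rpow_pos_of_pos hρ N).ne']

/-- Under the generalized Bishop–Gromov inequality, a small-ball density `A` at `x₀`,
and the Gaussian integral inequality `2λ ∫ d² e^{-2λd²} dμ ≥ (N/2) ∫ e^{-2λd²} dμ`
for all `λ > 0`, the measure `μ` is an `N`-volume cone at `x₀` with density `A`. -/
theorem volume_cone_of_gaussian_inequality {X : Type*} [MetricSpace X]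
    [MeasurableSpace X] [BorelSpace X] (μ : Measure X)
    (hμ : ∀ U : Set X, IsOpen U → Bornology.IsBounded U → U.Nonempty →
      0 < μ U ∧ μ U ≠ ⊤)
    (x₀ : X) (N A : ℝ) (hN : 1 < N) (hA : 0 < A)
    (hBG : AntitoneOn (fun ρ => (μ (Metric.ball x₀ ρ)).toReal / ρ ^ N) (Ioi 0))
    (hlim : Tendsto (fun ρ => (μ (Metric.ball x₀ ρ)).toReal / (omegaN N * ρ ^ N))
      (nhdsWithin 0 (Ioi 0)) (nhds A))
    (hineq : ∀ lam > (0:ℝ),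
      (N / 2) * ∫ x, Real.exp (-2 * lam * dist x₀ x ^ 2) ∂μ ≤
        2 * lam * ∫ x, dist x₀ x ^ 2 * Real.exp (-2 * lam * dist x₀ x ^ 2) ∂μ) :
    ∀ ρ > (0:ℝ), μ (Metric.ball x₀ ρ) = ENNReal.ofReal (A * omegaN N * ρ ^ N) :=
  volume_cone_of_gaussian_inequality_general μ hμ x₀ N A hN hBG hlim hineq
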